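/- Let G be a locally compact group, H a closed subgroup, μ a quasi-invariant regular Borel measure on G/H, and π a unitary representation of H on a Hilbert space 𝓗. Then the formula (ind_H^G π)(x)ξ(y) = (dμ_{x⁻¹}/dμ (yH))^{1/2} ξ(x⁻¹y) defines a unitary operator on the Hilbert space 𝓗(π) of measurable ξ : G → 𝓗 with ξ(xh) = π(h⁻¹)ξ(x) and ∫_{G/H} ‖ξ(x)‖² dμ < ∞, and x ↦ (ind_H^G π)(x) is a group homomorphism into the unitary group. -/

import Mathlib

open MeasureTheory
open scoped ComplexInnerProductSpace ENNReal

/-!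
Parts (a) and (c) are pointwise identities: `π h⁻¹` commutes with real scalars, and the cocycle
identity makes the square-root factors multiply. For (b), unitarity of `π` makes `⟪ξ y, η y⟫`
constant on cosets, say `F (yH)`, so the inner product of the translates is
`∫ c x p • F (x⁻¹ p) dμ`, which the change of variables `p ↦ x⁻¹ p` turns into `∫ F dμ`.
The only difficulty is that `c x` is not assumed measurable and `μ` is not assumed σ-finite:
one restricts to the σ-finite support of `F`, where the density of `x`, being reciprocal to
that of `x⁻¹`, agrees a.e. with a measurable minorant.
-/

/-- The induced representation formula
`(ind_H^G π)(x) ξ (y) = (dμ_{x⁻¹}/dμ (yH))^{1/2} ξ(x⁻¹ y)`, where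
`c x = dμ_{x⁻¹}/dμ` is a choice of Radon–Nikodym derivative. -/
noncomputable def indRep {G : Type*} [Group G] (H : Subgroup G)
    {𝓗 : Type*} [AddCommGroup 𝓗] [Module ℝ 𝓗]
    (c : G → G ⧸ H → ℝ) (x : G) (ξ : G → 𝓗) : G → 𝓗 :=
  fun y => Real.sqrt (c x (QuotientGroup.mk y)) • ξ (x⁻¹ * y)

theorem ENNReal.ne_top_of_mul_eq_one_left {a b : ℝ≥0∞} (h : a * b = 1) : a ≠ ∞ := by
  rw [ENNReal.eq_inv_of_mul_eq_one_left h]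
  exact ENNReal.inv_ne_top.2 (right_ne_zero_of_mul_eq_one h)

theorem ENNReal.ne_top_of_mul_eq_one_right {a b : ℝ≥0∞} (h : a * b = 1) : b ≠ ∞ :=
  ENNReal.ne_top_of_mul_eq_one_left (mul_comm a b ▸ h)

namespace MeasureTheory

variable {α β : Type*} [MeasurableSpace α] [MeasurableSpace β]

theorem MeasurableEquiv.map_withDensity (e : α ≃ᵐ β) (μ : Measure α) (f : α → ℝ≥0∞) :
    (μ.withDensity f).map e = (μ.map e).withDensity (f ∘ e.symm) := by
  ext s hs
  rw [e.map_apply, withDensity_apply _ hs, withDensity_apply _ (e.measurable hs), e.restrict_map,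
    lintegral_map_equiv]
  simp

theorem aemeasurable_of_withDensity_withDensity_eq_self {μ : Measure α} [SigmaFinite μ]
    {g u v : α → ℝ≥0∞} (hv : Measurable v) (hvu : v ≤ u) (hgu : ∀ a, g a * u a = 1)
    (h : (μ.withDensity g).withDensity v = μ) : AEMeasurable g μ := by
  obtain ⟨ĝ, hĝ, hĝg, hĝeq⟩ := exists_measurable_le_withDensity_eq μ g
  rw [← hĝeq, ← withDensity_mul μ hĝ hv] at h
  have hĝv : ĝ * v =ᵐ[μ] 1 :=
    (withDensity_eq_iff_of_sigmaFinite (hĝ.mul hv).aemeasurable aemeasurable_const).1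
      (h.trans withDensity_one.symm)
  refine ⟨ĝ, hĝ, hĝv.mono fun a ha => le_antisymm ?_ (hĝg a)⟩
  calc g a = (u a)⁻¹ := ENNReal.eq_inv_of_mul_eq_one_left (hgu a)
    _ ≤ (v a)⁻¹ := ENNReal.inv_le_inv.2 (hvu a)
    _ = ĝ a := (ENNReal.eq_inv_of_mul_eq_one_left ha).symm

/-- `g` is not assumed measurable, and `withDensity` cannot tell it from a measurable minorant;
reciprocity with the density of the inverse map forces the two to agree a.e. -/
theorem MeasurableEquiv.aemeasurable_of_map_eq_withDensity {μ : Measure α} {ν : Measure β}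
    [SigmaFinite ν] (e : α ≃ᵐ β) {f : β → ℝ≥0∞} {g : α → ℝ≥0∞}
    (hf : μ.map e = ν.withDensity f) (hg : ν.map e.symm = μ.withDensity g)
    (hfg : ∀ a, f (e a) * g a = 1) : AEMeasurable g μ := by
  have hμ : SigmaFinite μ := by
    have := SigmaFinite.withDensity_of_ne_top' (μ := ν) fun b =>
      e.apply_symm_apply b ▸ ENNReal.ne_top_of_mul_eq_one_left (hfg (e.symm b))
    rw [← e.map_symm_map (μ := μ), hf]
    exact e.symm.sigmaFinite_map
  obtain ⟨f', hf', hf'f, hf'eq⟩ := exists_measurable_le_withDensity_eq ν f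
  refine aemeasurable_of_withDensity_withDensity_eq_self (hf'.comp e.measurable)
    (fun a => hf'f (e a)) (fun a => mul_comm (f (e a)) (g a) ▸ hfg a) ?_
  have hmap := e.symm.map_withDensity ν f'
  rw [e.symm_symm] at hmap
  rw [← hg, ← hmap, hf'eq, ← hf, e.map_symm_map]

variable {E : Type*} [NormedAddCommGroup E] [NormedSpace ℝ E]

theorem MeasurableEquiv.integral_toReal_smul_comp_eq_integral {μ : Measure α} {ν : Measure β}
    (e : α ≃ᵐ β) {f : β → ℝ≥0∞} {g : α → ℝ≥0∞} (hf : μ.map e = ν.withDensity f)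
    (hg : ν.map e.symm = μ.withDensity g) (hfg : ∀ a, f (e a) * g a = 1) {F : β → E}
    (hF : AEFinStronglyMeasurable F ν) :
    ∫ a, (g a).toReal • F (e a) ∂μ = ∫ b, F b ∂ν := by
  set T := hF.sigmaFiniteSet
  have hT : MeasurableSet T := hF.measurableSet
  have hmap : ∀ s, MeasurableSet s → (μ.restrict (e ⁻¹' s)).map e = (ν.restrict s).withDensity f :=
    fun s hs => by rw [← e.restrict_map, hf, restrict_withDensity hs]
  have hmap_symm : (ν.restrict T).map e.symm = (μ.restrict (e ⁻¹' T)).withDensity g := by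
    rw [← restrict_withDensity (e.measurable hT), ← hg, e.symm.restrict_map,
      e.symm_preimage_preimage]
  have hg_meas : AEMeasurable g (μ.restrict (e ⁻¹' T)) :=
    e.aemeasurable_of_map_eq_withDensity (hmap T hT) hmap_symm hfg
  have hFT : ∀ᵐ b ∂ν, b ∉ T → F b = 0 := (ae_restrict_iff' hT.compl).1 hF.ae_eq_zero_compl
  have hFe : ∀ᵐ a ∂μ, a ∉ e ⁻¹' T → (g a).toReal • F (e a) = 0 := by
    have h : ∀ᵐ b ∂(μ.restrict (e ⁻¹' Tᶜ)).map e, F b = 0 := by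
      rw [hmap _ hT.compl]
      exact (withDensity_absolutelyContinuous _ _).ae_le hF.ae_eq_zero_compl
    filter_upwards [(ae_restrict_iff' (e.measurable hT.compl)).1
      (e.measurableEmbedding.ae_map_iff.1 h)] with a ha haT
    rw [ha haT, smul_zero]
  calc ∫ a, (g a).toReal • F (e a) ∂μ = ∫ a in e ⁻¹' T, (g a).toReal • F (e a) ∂μ :=
        (setIntegral_eq_integral_of_ae_compl_eq_zero hFe).symm
    _ = ∫ a, F (e a) ∂(μ.restrict (e ⁻¹' T)).withDensity g :=
        (integral_withDensity_eq_integral_toReal_smul₀ hg_meas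
          (ae_of_all _ fun a => (ENNReal.ne_top_of_mul_eq_one_right (hfg a)).lt_top) _).symm
    _ = ∫ b in T, F b ∂ν := by rw [← hmap_symm, integral_map_equiv]; simp
    _ = ∫ b, F b ∂ν := setIntegral_eq_integral_of_ae_compl_eq_zero hFT

end MeasureTheory

section InducedRepresentation

variable {G : Type*} [Group G] {H : Subgroup G} {𝓗 : Type*} [NormedAddCommGroup 𝓗]
  [InnerProductSpace ℂ 𝓗] {π : H →* (𝓗 →L[ℂ] 𝓗)} {c : G → G ⧸ H → ℝ}

theorem indRep_apply_mul_of_equivariant {x : G} {ξ : G → 𝓗}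
    (hξ : ∀ (y : G) (h : H), ξ (y * (h : G)) = π h⁻¹ (ξ y)) (y : G) (h : H) :
    indRep H c x ξ (y * (h : G)) = π h⁻¹ (indRep H c x ξ y) := by
  simp only [indRep]
  rw [QuotientGroup.mk_mul_of_mem y h.2, ← mul_assoc, hξ, ContinuousLinearMap.map_smul_of_tower]

theorem indRep_one (hc1 : ∀ p, c 1 p = 1) (ξ : G → 𝓗) : indRep H c 1 ξ = ξ := by
  funext y
  simp [indRep, hc1]

theorem indRep_mul (hc : ∀ x p, 0 ≤ c x p)
    (hcoc : ∀ (x y : G) (p : G ⧸ H), c (x * y) p = c x p * c y (x⁻¹ • p)) (x₁ x₂ : G)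
    (ξ : G → 𝓗) : indRep H c (x₁ * x₂) ξ = indRep H c x₁ (indRep H c x₂ ξ) := by
  funext y
  simp only [indRep]
  rw [hcoc, Real.sqrt_mul (hc x₁ _), smul_smul, mul_inv_rev, mul_assoc,
    MulAction.Quotient.smul_mk, smul_eq_mul]

theorem inner_indRep_apply {x : G} (hc : ∀ p, 0 ≤ c x p) (ξ η : G → 𝓗) (y : G) :
    ⟪indRep H c x ξ y, indRep H c x η y⟫ = (c x y : ℝ) • (⟪ξ (x⁻¹ * y), η (x⁻¹ * y)⟫ : ℂ) := by
  simp only [indRep]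
  rw [RCLike.real_smul_eq_coe_smul (K := ℂ) _ (ξ _), RCLike.real_smul_eq_coe_smul (K := ℂ) _ (η _),
    inner_smul_real_left, inner_smul_real_right, smul_smul, Real.mul_self_sqrt (hc _)]

theorem inner_apply_out_mk (hπ : ∀ (h : H) (v w : 𝓗), ⟪π h v, π h w⟫ = ⟪v, w⟫) {ξ η : G → 𝓗}
    (hξ : ∀ (y : G) (h : H), ξ (y * (h : G)) = π h⁻¹ (ξ y))
    (hη : ∀ (y : G) (h : H), η (y * (h : G)) = π h⁻¹ (η y)) (y : G) :
    ⟪ξ (y : G ⧸ H).out, η (y : G ⧸ H).out⟫ = ⟪ξ y, η y⟫ := by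
  obtain ⟨h, hh⟩ := QuotientGroup.mk_out_eq_mul H y
  rw [hh, hξ, hη, hπ]

end InducedRepresentation

theorem induced_representation_unitary_homomorphism_general
    {G : Type*} [Group G] [TopologicalSpace G] [IsTopologicalGroup G]
    (H : Subgroup G)
    [MeasurableSpace (G ⧸ H)] [BorelSpace (G ⧸ H)]
    (μ : Measure (G ⧸ H))
    -- `c x` is an everywhere-defined version of the Radon–Nikodym derivative
    -- `dμ_{x⁻¹}/dμ`, witnessing quasi-invariance of `μ`
    (c : G → G ⧸ H → ℝ) (hcpos : ∀ x p, 0 < c x p)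
    (hqi : ∀ x : G,
      μ.map (fun p : G ⧸ H => x • p) = μ.withDensity (fun p => ENNReal.ofReal (c x p)))
    (hcoc : ∀ (x y : G) (p : G ⧸ H), c (x * y) p = c x p * c y (x⁻¹ • p))
    (hc1 : ∀ p, c 1 p = 1)
    {𝓗 : Type*} [NormedAddCommGroup 𝓗] [InnerProductSpace ℂ 𝓗]
    -- the unitary representation `π` of `H`
    (π : H →* (𝓗 →L[ℂ] 𝓗))
    (hπ : ∀ (h : H) (v w : 𝓗), ⟪π h v, π h w⟫ = ⟪v, w⟫) :
    -- (a) the equivariance condition `ξ(xh) = π(h⁻¹) ξ(x)` is preserved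
    (∀ (x : G) (ξ : G → 𝓗), (∀ (y : G) (h : H), ξ (y * (h : G)) = π h⁻¹ (ξ y)) →
      ∀ (y : G) (h : H), indRep H c x ξ (y * (h : G)) = π h⁻¹ (indRep H c x ξ y)) ∧
    -- (b) the inner product of `𝓗(π)` is preserved: each operator is unitary
    (∀ (x : G) (ξ η : G → 𝓗),
      (∀ (y : G) (h : H), ξ (y * (h : G)) = π h⁻¹ (ξ y)) →
      (∀ (y : G) (h : H), η (y * (h : G)) = π h⁻¹ (η y)) →
      Integrable (fun p : G ⧸ H => (⟪ξ p.out, η p.out⟫ : ℂ)) μ →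
      (∫ p : G ⧸ H, (⟪indRep H c x ξ p.out, indRep H c x η p.out⟫ : ℂ) ∂μ) =
        ∫ p : G ⧸ H, (⟪ξ p.out, η p.out⟫ : ℂ) ∂μ) ∧
    -- (c) `x ↦ ind_H^G π (x)` is a group homomorphism
    (∀ ξ : G → 𝓗, indRep H c 1 ξ = ξ) ∧
    (∀ (x₁ x₂ : G) (ξ : G → 𝓗),
      indRep H c (x₁ * x₂) ξ = indRep H c x₁ (indRep H c x₂ ξ)) := by
  refine ⟨fun x ξ hξ => indRep_apply_mul_of_equivariant hξ, fun x ξ η hξ hη hint => ?_,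
    indRep_one hc1, indRep_mul (fun x p => (hcpos x p).le) hcoc⟩
  have hinner : ∀ p : G ⧸ H, ⟪indRep H c x ξ p.out, indRep H c x η p.out⟫ =
      (ENNReal.ofReal (c x p)).toReal • ⟪ξ (x⁻¹ • p).out, η (x⁻¹ • p).out⟫ := fun p => by
    conv_rhs => rw [← QuotientGroup.out_eq' p, MulAction.Quotient.smul_mk, smul_eq_mul,
      inner_apply_out_mk hπ hξ hη, ENNReal.toReal_ofReal (hcpos x _).le]
    rw [inner_indRep_apply fun p => (hcpos x p).le, QuotientGroup.out_eq']
  have hreciprocal :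
      ∀ p, ENNReal.ofReal (c x⁻¹ (x⁻¹ • p)) * ENNReal.ofReal (c x p) = 1 := fun p => by
    rw [← ENNReal.ofReal_mul (hcpos _ _).le, mul_comm, ← hcoc, mul_inv_cancel, hc1,
      ENNReal.ofReal_one]
  rw [integral_congr_ae (ae_of_all _ hinner)]
  exact (MeasurableEquiv.smul x).symm.integral_toReal_smul_comp_eq_integral
    (f := fun p => ENNReal.ofReal (c x⁻¹ p)) (g := fun p => ENNReal.ofReal (c x p))
    (by simpa using hqi x⁻¹) (by simpa using hqi x) (by simpa using hreciprocal)
    hint.aefinStronglyMeasurable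

/-- For a closed subgroup `H ≤ G`, a quasi-invariant regular Borel measure `μ`
on `G/H` and a unitary representation `π` of `H` on `𝓗`, the induced
representation formula preserves the equivariance condition defining `𝓗(π)`,
preserves the inner product (so each `ind_H^G π (x)` is unitary), and is
multiplicative in `x` (a homomorphism into the unitary group). -/
theorem induced_representation_unitary_homomorphism
    {G : Type*} [Group G] [TopologicalSpace G] [IsTopologicalGroup G]
    [LocallyCompactSpace G]
    (H : Subgroup G) (hHclosed : IsClosed (H : Set G))
    [MeasurableSpace (G ⧸ H)] [BorelSpace (G ⧸ H)]
    (μ : Measure (G ⧸ H)) [μ.Regular]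
    -- `c x` is an everywhere-defined version of the Radon–Nikodym derivative
    -- `dμ_{x⁻¹}/dμ`, witnessing quasi-invariance of `μ`
    (c : G → G ⧸ H → ℝ) (hcpos : ∀ x p, 0 < c x p)
    (hqi : ∀ x : G,
      μ.map (fun p : G ⧸ H => x • p) = μ.withDensity (fun p => ENNReal.ofReal (c x p)))
    (hcoc : ∀ (x y : G) (p : G ⧸ H), c (x * y) p = c x p * c y (x⁻¹ • p))
    (hc1 : ∀ p, c 1 p = 1)
    {𝓗 : Type*} [NormedAddCommGroup 𝓗] [InnerProductSpace ℂ 𝓗] [CompleteSpace 𝓗]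
    -- the unitary representation `π` of `H`
    (π : H →* (𝓗 →L[ℂ] 𝓗))
    (hπ : ∀ (h : H) (v w : 𝓗), ⟪π h v, π h w⟫ = ⟪v, w⟫) :
    -- (a) the equivariance condition `ξ(xh) = π(h⁻¹) ξ(x)` is preserved
    (∀ (x : G) (ξ : G → 𝓗), (∀ (y : G) (h : H), ξ (y * (h : G)) = π h⁻¹ (ξ y)) →
      ∀ (y : G) (h : H), indRep H c x ξ (y * (h : G)) = π h⁻¹ (indRep H c x ξ y)) ∧
    -- (b) the inner product of `𝓗(π)` is preserved: each operator is unitary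
    (∀ (x : G) (ξ η : G → 𝓗),
      (∀ (y : G) (h : H), ξ (y * (h : G)) = π h⁻¹ (ξ y)) →
      (∀ (y : G) (h : H), η (y * (h : G)) = π h⁻¹ (η y)) →
      Integrable (fun p : G ⧸ H => (⟪ξ p.out, η p.out⟫ : ℂ)) μ →
      (∫ p : G ⧸ H, (⟪indRep H c x ξ p.out, indRep H c x η p.out⟫ : ℂ) ∂μ) =
        ∫ p : G ⧸ H, (⟪ξ p.out, η p.out⟫ : ℂ) ∂μ) ∧
    -- (c) `x ↦ ind_H^G π (x)` is a group homomorphism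
    (∀ ξ : G → 𝓗, indRep H c 1 ξ = ξ) ∧
    (∀ (x₁ x₂ : G) (ξ : G → 𝓗),
      indRep H c (x₁ * x₂) ξ = indRep H c x₁ (indRep H c x₂ ξ)) :=
  induced_representation_unitary_homomorphism_general H μ c hcpos hqi hcoc hc1 π hπ
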